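/- Let a and b be reals with 0 ≤ a < b and let ℓ be a natural number with b − a ≥ 2^{−ℓ}; then ⌊a·2^ℓ⌋ < ⌊b·2^ℓ⌋. Consequently, if n ≥ 2 is an integer and α_0,…,α_m are leaf probabilities with Σ α_i = 1 and α_i ≥ 1/n for every i, then every node power satisfies P_j ≤ ⌊log₂ n⌋ + 1. -/

import Mathlib

/-!
Two reals at distance at least `1` have distinct integer parts, so scaling by `2^ℓ` separates
`⌊a·2^ℓ⌋` and `⌊b·2^ℓ⌋` as soon as `b - a ≥ 2^{-ℓ}`. For node `j` the gap is
`(α_{j-1} + α_j)/2 ≥ 1/n`, and `1/n > 2^{-(⌊log₂ n⌋ + 1)}` because `n < 2^{⌊log₂ n⌋ + 1}`.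
-/

/-- The power of a split with boundaries `a < b`: the index of the first bit
in which the binary fractional expansions of `a` and `b` differ. -/
noncomputable def nodePower (a b : ℝ) : ℕ :=
  sInf {ℓ : ℕ | ⌊a * 2 ^ ℓ⌋ < ⌊b * 2 ^ ℓ⌋}

lemma Int.floor_lt_floor_of_add_one_le {R : Type*} [Ring R] [LinearOrder R]
    [IsStrictOrderedRing R] [FloorRing R] {a b : R} (h : a + 1 ≤ b) : ⌊a⌋ < ⌊b⌋ :=
  calc ⌊a⌋ < ⌊a⌋ + 1 := lt_add_one _
    _ = ⌊a + 1⌋ := (Int.floor_add_one a).symm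
    _ ≤ ⌊b⌋ := Int.floor_le_floor h

lemma floor_mul_two_pow_lt_of_zpow_le_sub {a b : ℝ} {ℓ : ℕ}
    (h : (2 : ℝ) ^ (-(ℓ : ℤ)) ≤ b - a) : ⌊a * 2 ^ ℓ⌋ < ⌊b * 2 ^ ℓ⌋ := by
  apply Int.floor_lt_floor_of_add_one_le
  have hpos : (0 : ℝ) < 2 ^ ℓ := by positivity
  rw [zpow_neg, zpow_natCast, inv_le_iff_one_le_mul₀' hpos] at h
  linarith

lemma nodePower_le_of_zpow_le_sub {a b : ℝ} {ℓ : ℕ}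
    (h : (2 : ℝ) ^ (-(ℓ : ℤ)) ≤ b - a) : nodePower a b ≤ ℓ :=
  Nat.sInf_le (floor_mul_two_pow_lt_of_zpow_le_sub h)

lemma zpow_neg_log_succ_le_one_div {b n : ℕ} (hb : 1 < b) (hn : 0 < n) :
    (b : ℝ) ^ (-((Nat.log b n + 1 : ℕ) : ℤ)) ≤ 1 / n := by
  have hlt : (n : ℝ) < (b : ℝ) ^ (Nat.log b n + 1) := by
    exact_mod_cast Nat.lt_pow_succ_log_self hb n
  rw [zpow_neg, zpow_natCast, one_div]
  exact (inv_lt_inv₀ (by positivity) (by positivity)).2 hlt |>.le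

theorem floor_lt_floor_of_gap_and_nodePower_le_log :
    (∀ (a b : ℝ) (ℓ : ℕ), 0 ≤ a → a < b → (2 : ℝ) ^ (-(ℓ : ℤ)) ≤ b - a →
      ⌊a * 2 ^ ℓ⌋ < ⌊b * 2 ^ ℓ⌋) ∧
    (∀ (n m : ℕ), 2 ≤ n → 1 ≤ m → ∀ α : ℕ → ℝ,
      (∑ i ∈ Finset.range (m + 1), α i) = 1 →
      (∀ i ≤ m, 1 / (n : ℝ) ≤ α i) →
      ∀ j, 1 ≤ j → j ≤ m →
        nodePower ((∑ i ∈ Finset.range j, α i) - α (j - 1) / 2)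
                  ((∑ i ∈ Finset.range j, α i) + α j / 2)
          ≤ Nat.log 2 n + 1) := by
  refine ⟨fun a b ℓ _ _ h => floor_mul_two_pow_lt_of_zpow_le_sub h, ?_⟩
  intro n m hn _ α _ hα j hj hjm
  apply nodePower_le_of_zpow_le_sub
  have hprev := hα (j - 1) (by omega)
  have hcur := hα j hjm
  have hscale : (2 : ℝ) ^ (-((Nat.log 2 n + 1 : ℕ) : ℤ)) ≤ 1 / n := by
    exact_mod_cast zpow_neg_log_succ_le_one_div one_lt_two (by omega : 0 < n)
  linarith
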